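/- arXiv:2411.12726 — 4 statements merged into one kernel-verified Lean document; each statement's English description precedes it below -/
import Mathlib

section
/- Under the Bayesian inverse problem setting, let T : ℝⁿ → ℝⁿ be a C¹ diffeomorphism with det ∇T(m) > 0 for all m and K := T − id. Assume 0 < Zʸ < ∞ and that the functions m ↦ Φʸ(T(m)), m ↦ log det ∇T(m), m ↦ mᵀC⁻¹K(m), and m ↦ K(m)ᵀC⁻¹K(m) are μ-integrable. Then the Kullback–Leibler divergence of μ from the pullback measure T♯μʸ (defined by (T♯μʸ)(A) = μʸ(T(A))) is finite and satisfies KL(μ ‖ T♯μʸ) = ∫ [ Φʸ(T(m)) − log det ∇T(m) + mᵀC⁻¹K(m) + ½ K(m)ᵀC⁻¹K(m) ] dμ(m) + log Zʸ. -/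
/-!
Both `μ = N(0, C)` and the pullback `T♯μʸ` have everywhere positive Lebesgue densities: `μ` has
the Gaussian density `ρ`, and by the change of variables formula `T♯μʸ` has the density
`det ∇T · (ρ e^{-Φʸ} / Zʸ) ∘ T`. Hence
`log dμ/d(T♯μʸ) = log (ρ / ρ ∘ T) − log det ∇T + Φʸ ∘ T + log Zʸ`,
and the Gaussian log-ratio `log (ρ(m) / ρ(T m))` expands to `mᵀC⁻¹K(m) + ½ K(m)ᵀC⁻¹K(m)`.
Integrating against the probability measure `μ` gives the identity.
-/

open MeasureTheory Matrix Real

noncomputable section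

/-- Gaussian measure `N(m₀, C)` on `ℝⁿ`, defined via its Lebesgue density. -/
def gaussianOf {n : ℕ} (m₀ : Fin n → ℝ) (C : Matrix (Fin n) (Fin n) ℝ) :
    Measure (Fin n → ℝ) :=
  volume.withDensity fun m =>
    ENNReal.ofReal (((2 * π) ^ n * C.det) ^ (-(1 : ℝ) / 2) *
      Real.exp (-(1 / 2) * ((m - m₀) ⬝ᵥ C⁻¹ *ᵥ (m - m₀))))

/-- Jacobian matrix of `f : ℝⁿ → ℝᵈ` at `x`. -/
def jac {n d : ℕ} (f : (Fin n → ℝ) → (Fin d → ℝ)) (x : Fin n → ℝ) :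
    Matrix (Fin d) (Fin n) ℝ :=
  Matrix.of fun i j => fderiv ℝ f x (Pi.single j 1) i

/-- Kullback–Leibler divergence `∫ log (dν₁/dν₂) dν₁` (real-valued). -/
def KLdiv {α : Type*} [MeasurableSpace α] (ν₁ ν₂ : Measure α) : ℝ :=
  ∫ x, Real.log ((ν₁.rnDeriv ν₂ x).toReal) ∂ν₁

/-- The potential (negative log-likelihood) `Φʸ(m) = ½ (G(m)−y)ᵀΓ⁻¹(G(m)−y)`. -/
def potential {n d : ℕ} (Γ : Matrix (Fin d) (Fin d) ℝ)
    (G : (Fin n → ℝ) → (Fin d → ℝ)) (y : Fin d → ℝ) (m : Fin n → ℝ) : ℝ :=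
  (1 / 2) * ((G m - y) ⬝ᵥ Γ⁻¹ *ᵥ (G m - y))

/-- The normalization constant `Zʸ = ∫ exp(−Φʸ) dμ`. -/
def Znorm {n d : ℕ} (C : Matrix (Fin n) (Fin n) ℝ) (Γ : Matrix (Fin d) (Fin d) ℝ)
    (G : (Fin n → ℝ) → (Fin d → ℝ)) (y : Fin d → ℝ) : ℝ :=
  ∫ m, Real.exp (-(potential Γ G y m)) ∂(gaussianOf 0 C)

/-- The Bayesian posterior `dμʸ/dμ = exp(−Φʸ)/Zʸ`. -/
def posterior {n d : ℕ} (C : Matrix (Fin n) (Fin n) ℝ) (Γ : Matrix (Fin d) (Fin d) ℝ)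
    (G : (Fin n → ℝ) → (Fin d → ℝ)) (y : Fin d → ℝ) : Measure (Fin n → ℝ) :=
  (gaussianOf 0 C).withDensity fun m =>
    ENNReal.ofReal (Real.exp (-(potential Γ G y m)) / Znorm C Γ G y)

open scoped ENNReal

lemma half_dotProduct_mulVec_sub_half_dotProduct_mulVec {ι : Type*} [Fintype ι]
    {A : Matrix ι ι ℝ} (hA : A.IsSymm) (m t : ι → ℝ) :
    (1 / 2) * (t ⬝ᵥ A *ᵥ t) - (1 / 2) * (m ⬝ᵥ A *ᵥ m) =
      m ⬝ᵥ A *ᵥ (t - m) + (1 / 2) * ((t - m) ⬝ᵥ A *ᵥ (t - m)) := by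
  have hsymm : (t - m) ⬝ᵥ A *ᵥ m = m ⬝ᵥ A *ᵥ (t - m) := by
    rw [dotProduct_mulVec, ← mulVec_transpose, hA.eq, dotProduct_comm]
  have ht : t = m + (t - m) := by abel
  conv_lhs => rw [ht]
  simp only [mulVec_add, dotProduct_add, add_dotProduct, hsymm]
  ring

lemma lintegral_exp_neg_half_sum_sq (ι : Type*) [Fintype ι] :
    ∫⁻ y : ι → ℝ, ENNReal.ofReal (exp (-(1 / 2) * ∑ i, y i ^ 2)) =
      ENNReal.ofReal (√(2 * π) ^ Fintype.card ι) := by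
  have hprod : (fun y : ι → ℝ => exp (-(1 / 2) * ∑ i, y i ^ 2)) =
      fun y => ∏ i, exp (-(1 / 2) * y i ^ 2) := by
    ext y
    rw [Finset.mul_sum, exp_sum]
  have h1 : ∫ t : ℝ, exp (-(1 / 2) * t ^ 2) = √(2 * π) := by
    rw [integral_gaussian]
    ring_nf
  rw [← ofReal_integral_eq_lintegral_ofReal, hprod,
    integral_fintype_prod_volume_eq_pow fun t : ℝ => exp (-(1 / 2) * t ^ 2), h1]
  · rw [hprod]
    exact Integrable.fintype_prod fun _ => integrable_exp_neg_mul_sq (by norm_num)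
  · exact ae_of_all _ fun y => (exp_pos _).le

open scoped MatrixOrder in
lemma lintegral_exp_neg_half_inv_quad {ι : Type*} [Fintype ι] [DecidableEq ι]
    {C : Matrix ι ι ℝ} (hC : C.PosDef) :
    ∫⁻ m : ι → ℝ, ENNReal.ofReal (exp (-(1 / 2) * (m ⬝ᵥ C⁻¹ *ᵥ m))) =
      ENNReal.ofReal (√((2 * π) ^ Fintype.card ι * C.det)) := by
  -- Substituting `m = S y` with `S = C^{1/2}` turns the quadratic form into `∑ i, y i ^ 2`.
  set S := CFC.sqrt C
  have hS : Sᵀ = S := by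
    simpa [conjTranspose_eq_transpose_of_trivial] using
      (CFC.sqrt_nonneg C).posSemidef.isHermitian.eq
  have hSS : S * S = C := CFC.sqrt_mul_sqrt_self C hC.posSemidef.nonneg
  have hdet : S.det ^ 2 = C.det := by rw [sq, ← det_mul, hSS]
  have hdetS : S.det ≠ 0 := fun h => hC.det_pos.ne' (by rw [← hdet, h]; ring)
  have hquad : ∀ y : ι → ℝ, (S *ᵥ y) ⬝ᵥ C⁻¹ *ᵥ (S *ᵥ y) = ∑ i, y i ^ 2 := by
    intro y
    have hSCS : S * C⁻¹ * S = 1 := by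
      rw [← hSS, Matrix.mul_inv_rev, ← Matrix.mul_assoc,
        mul_nonsing_inv _ (isUnit_iff_ne_zero.2 hdetS), Matrix.one_mul,
        nonsing_inv_mul _ (isUnit_iff_ne_zero.2 hdetS)]
    rw [mulVec_mulVec, ← vecMul_transpose, hS, ← dotProduct_mulVec, mulVec_mulVec,
      ← Matrix.mul_assoc, hSCS, one_mulVec]
    simp [dotProduct, sq]
  have hmeas :
      Measurable fun m : ι → ℝ => ENNReal.ofReal (exp (-(1 / 2) * (m ⬝ᵥ C⁻¹ *ᵥ m))) := by
    fun_prop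
  have hmap := lintegral_map hmeas (toLin' S).continuous_of_finiteDimensional.measurable
    (μ := volume)
  rw [Real.map_matrix_volume_pi_eq_smul_volume_pi hdetS, lintegral_smul_measure] at hmap
  simp only [toLin'_apply, hquad, lintegral_exp_neg_half_sum_sq, smul_eq_mul] at hmap
  have hsqrt : √((2 * π) ^ Fintype.card ι * C.det) = |S.det| * √(2 * π) ^ Fintype.card ι := by
    rw [← sqrt_sq (by positivity : 0 ≤ |S.det| * √(2 * π) ^ Fintype.card ι)]
    congr 1
    rw [mul_pow |S.det|, sq_abs, hdet, ← pow_mul, mul_comm _ 2, pow_mul, sq_sqrt (by positivity)]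
    ring
  rw [hsqrt, ENNReal.ofReal_mul (abs_nonneg _), ← hmap, ← mul_assoc, ← ENNReal.ofReal_mul
    (abs_nonneg _), ← abs_mul, mul_inv_cancel₀ hdetS, abs_one, ENNReal.ofReal_one, one_mul]

def gaussianDensity {n : ℕ} (C : Matrix (Fin n) (Fin n) ℝ) (m : Fin n → ℝ) : ℝ :=
  ((2 * π) ^ n * C.det) ^ (-(1 : ℝ) / 2) * exp (-(1 / 2) * (m ⬝ᵥ C⁻¹ *ᵥ m))

section GaussianDensity

variable {n : ℕ} {C : Matrix (Fin n) (Fin n) ℝ}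

lemma gaussianOf_zero_eq_withDensity (C : Matrix (Fin n) (Fin n) ℝ) :
    gaussianOf 0 C = volume.withDensity fun m => ENNReal.ofReal (gaussianDensity C m) := by
  simp only [gaussianOf, gaussianDensity, sub_zero]

lemma gaussianDensity_pos (hC : C.PosDef) (m : Fin n → ℝ) : 0 < gaussianDensity C m := by
  have := hC.det_pos
  unfold gaussianDensity
  positivity

lemma measurable_gaussianDensity (C : Matrix (Fin n) (Fin n) ℝ) :
    Measurable (gaussianDensity C) := by
  unfold gaussianDensity
  fun_prop

lemma isProbabilityMeasure_gaussianOf (hC : C.PosDef) : IsProbabilityMeasure (gaussianOf 0 C) := by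
  have hbase : 0 < (2 * π) ^ n * C.det := by
    have := hC.det_pos
    positivity
  constructor
  rw [gaussianOf_zero_eq_withDensity, withDensity_apply _ MeasurableSet.univ,
    Measure.restrict_univ]
  simp only [gaussianDensity, ENNReal.ofReal_mul (rpow_nonneg hbase.le _)]
  rw [lintegral_const_mul _ (by fun_prop), lintegral_exp_neg_half_inv_quad hC, Fintype.card_fin,
    ← ENNReal.ofReal_mul (rpow_nonneg hbase.le _), sqrt_eq_rpow, ← rpow_add hbase]
  norm_num

lemma log_gaussianDensity_div (hC : C.PosDef) (m t : Fin n → ℝ) :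
    log (gaussianDensity C m / gaussianDensity C t) =
      m ⬝ᵥ C⁻¹ *ᵥ (t - m) + (1 / 2) * ((t - m) ⬝ᵥ C⁻¹ *ᵥ (t - m)) := by
  have hc : 0 < ((2 * π) ^ n * C.det) ^ (-(1 : ℝ) / 2) := by
    have := hC.det_pos
    positivity
  rw [← half_dotProduct_mulVec_sub_half_dotProduct_mulVec
    (isHermitian_iff_isSymm.1 hC.inv.isHermitian), gaussianDensity, gaussianDensity,
    mul_div_mul_left _ _ hc.ne', ← exp_sub, log_exp]
  ring

end GaussianDensity

lemma map_withDensity_of_hasFDerivAt_of_inverse {E : Type*} [NormedAddCommGroup E]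
    [NormedSpace ℝ E] [FiniteDimensional ℝ E] [MeasurableSpace E] [BorelSpace E]
    (μ : Measure E) [μ.IsAddHaarMeasure] {T Tinv : E → E} {T' : E → E →L[ℝ] E}
    (hT' : ∀ x, HasFDerivAt T (T' x) x) (hli : Function.LeftInverse Tinv T)
    (hri : Function.RightInverse Tinv T) (f : E → ℝ≥0∞) :
    (μ.withDensity f).map Tinv =
      μ.withDensity fun x => ENNReal.ofReal |(T' x).det| * f (T x) := by
  have hT'within (s : Set E) : ∀ x ∈ s, HasFDerivWithinAt T (T' x) s x :=
    fun x _ => (hT' x).hasFDerivWithinAt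
  have himage (s : Set E) : T '' s = Tinv ⁻¹' s := by
    rw [Set.image_eq_preimage_of_inverse hli hri]
  -- `T` maps measurable sets to measurable sets (Lusin–Souslin), so `Tinv` is measurable.
  have hTinv : Measurable Tinv := fun s hs => by
    rw [← himage]
    exact measurable_image_of_fderivWithin hs (hT'within s) hli.injective.injOn
  ext s hs
  rw [Measure.map_apply hTinv hs, withDensity_apply _ (hTinv hs), withDensity_apply _ hs,
    ← himage, lintegral_image_eq_lintegral_abs_det_fderiv_mul μ hs (hT'within s)
      hli.injective.injOn]

lemma rnDeriv_withDensity_withDensity_ae_eq_div {α : Type*} [MeasurableSpace α] (κ : Measure α)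
    [SigmaFinite κ] {f g : α → ℝ≥0∞} (hf : Measurable f) (hg : Measurable g)
    (hg_ne_zero : ∀ x, g x ≠ 0) (hg_ne_top : ∀ x, g x ≠ ∞) :
    (κ.withDensity f).rnDeriv (κ.withDensity g) =ᵐ[κ.withDensity f] f / g := by
  have : SigmaFinite (κ.withDensity g) :=
    SigmaFinite.withDensity_of_ne_top (ae_of_all _ hg_ne_top)
  have hfg : κ.withDensity f = (κ.withDensity g).withDensity (f / g) := by
    rw [← withDensity_mul _ hg (hf.div hg)]
    congr with x
    exact (ENNReal.mul_div_cancel (hg_ne_zero x) (hg_ne_top x)).symm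
  rw [hfg]
  exact (withDensity_absolutelyContinuous _ _).ae_eq (Measure.rnDeriv_withDensity _ (hf.div hg))

lemma det_jac {n : ℕ} (f : (Fin n → ℝ) → Fin n → ℝ) (x : Fin n → ℝ) :
    (jac f x).det = (fderiv ℝ f x).det := by
  have : jac f x = LinearMap.toMatrix' (fderiv ℝ f x : (Fin n → ℝ) →ₗ[ℝ] Fin n → ℝ) := by
    ext i j
    rw [jac, of_apply, LinearMap.toMatrix'_apply, ContinuousLinearMap.coe_coe]
  rw [this, LinearMap.det_toMatrix', ContinuousLinearMap.det]

section Posterior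

variable {n d : ℕ} {C : Matrix (Fin n) (Fin n) ℝ} {Γ : Matrix (Fin d) (Fin d) ℝ}
  {G : (Fin n → ℝ) → Fin d → ℝ} {y : Fin d → ℝ}

lemma continuous_potential (hG : Continuous G) : Continuous (potential Γ G y) := by
  unfold potential
  fun_prop

lemma posterior_eq_withDensity (hC : C.PosDef) (hG : Continuous G) :
    posterior C Γ G y = volume.withDensity fun m =>
      ENNReal.ofReal (gaussianDensity C m * (exp (-potential Γ G y m) / Znorm C Γ G y)) := by
  have := continuous_potential (Γ := Γ) (y := y) hG
  rw [posterior, gaussianOf_zero_eq_withDensity,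
    ← withDensity_mul _ (measurable_gaussianDensity C).ennreal_ofReal (by fun_prop)]
  congr with m
  rw [Pi.mul_apply, ENNReal.ofReal_mul (gaussianDensity_pos hC m).le]

lemma map_posterior_eq_withDensity (hC : C.PosDef) (hG : Continuous G)
    {T Tinv : (Fin n → ℝ) → Fin n → ℝ} (hT : Differentiable ℝ T)
    (hli : Function.LeftInverse Tinv T) (hri : Function.RightInverse Tinv T)
    (hdet : ∀ m, 0 < (jac T m).det) :
    (posterior C Γ G y).map Tinv = volume.withDensity fun m =>
      ENNReal.ofReal ((jac T m).det *
        (gaussianDensity C (T m) * (exp (-potential Γ G y (T m)) / Znorm C Γ G y))) := by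
  rw [posterior_eq_withDensity hC hG, map_withDensity_of_hasFDerivAt_of_inverse volume
    (fun x => (hT x).hasFDerivAt) hli hri]
  congr with m
  rw [← det_jac, abs_of_pos (hdet m), ENNReal.ofReal_mul (hdet m).le]

end Posterior

lemma log_rnDeriv_gaussianOf_map_posterior_ae_eq {n d : ℕ} {C : Matrix (Fin n) (Fin n) ℝ}
    (hC : C.PosDef) {Γ : Matrix (Fin d) (Fin d) ℝ} {G : (Fin n → ℝ) → Fin d → ℝ}
    (hG : Continuous G) {y : Fin d → ℝ} {T Tinv : (Fin n → ℝ) → Fin n → ℝ}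
    (hT : Differentiable ℝ T) (hli : Function.LeftInverse Tinv T)
    (hri : Function.RightInverse Tinv T) (hdet : ∀ m, 0 < (jac T m).det)
    (hZ : 0 < Znorm C Γ G y) :
    (fun m => log ((gaussianOf 0 C).rnDeriv ((posterior C Γ G y).map Tinv) m).toReal)
      =ᵐ[gaussianOf 0 C] fun m =>
        potential Γ G y (T m) - log (jac T m).det + m ⬝ᵥ C⁻¹ *ᵥ (T m - m) +
          (1 / 2) * ((T m - m) ⬝ᵥ C⁻¹ *ᵥ (T m - m)) + log (Znorm C Γ G y) := by
  set g : (Fin n → ℝ) → ℝ := fun m => (jac T m).det *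
    (gaussianDensity C (T m) * (exp (-potential Γ G y (T m)) / Znorm C Γ G y)) with hg
  have hρ := gaussianDensity_pos hC
  have hlik (m : Fin n → ℝ) : 0 < exp (-potential Γ G y (T m)) / Znorm C Γ G y :=
    div_pos (exp_pos _) hZ
  have hg_pos (m : Fin n → ℝ) : 0 < g m := mul_pos (hdet m) (mul_pos (hρ (T m)) (hlik m))
  have hg_meas : Measurable g := by
    have hJ : Measurable fun m => (jac T m).det := by
      simp only [det_jac]
      exact ContinuousLinearMap.continuous_det.measurable.comp (measurable_fderiv ℝ T)
    have hTm := hT.continuous.measurable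
    exact hJ.mul (((measurable_gaussianDensity C).comp hTm).mul
      (((continuous_potential hG).measurable.comp hTm).neg.exp.div_const _))
  have hrn := rnDeriv_withDensity_withDensity_ae_eq_div volume
    (measurable_gaussianDensity C).ennreal_ofReal hg_meas.ennreal_ofReal
    (fun m => (ENNReal.ofReal_pos.2 (hg_pos m)).ne') (fun _ => ENNReal.ofReal_ne_top)
  rw [← gaussianOf_zero_eq_withDensity, ← map_posterior_eq_withDensity hC hG hT hli hri hdet]
    at hrn
  filter_upwards [hrn] with m hm
  rw [hm, Pi.div_apply, ENNReal.toReal_div, ENNReal.toReal_ofReal (hρ m).le,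
    ENNReal.toReal_ofReal (hg_pos m).le]
  have hratio := log_gaussianDensity_div hC m (T m)
  rw [log_div (hρ m).ne' (hρ (T m)).ne'] at hratio
  rw [log_div (hρ m).ne' (hg_pos m).ne', hg, log_mul (hdet m).ne' (mul_pos (hρ (T m)) (hlik m)).ne',
    log_mul (hρ (T m)).ne' (hlik m).ne', log_div (exp_pos _).ne' hZ.ne', log_exp]
  linarith

theorem rKL_pullback_objective_identity_general
    {n d : ℕ} (C : Matrix (Fin n) (Fin n) ℝ) (hC : C.PosDef)
    (Γ : Matrix (Fin d) (Fin d) ℝ)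
    (G : (Fin n → ℝ) → (Fin d → ℝ)) (hG : ContDiff ℝ 1 G)
    (y : Fin d → ℝ)
    (T Tinv : (Fin n → ℝ) → (Fin n → ℝ))
    (hT : ContDiff ℝ 1 T)
    (hli : Function.LeftInverse Tinv T) (hri : Function.RightInverse Tinv T)
    (hdet : ∀ m, 0 < (jac T m).det)
    (hZ : 0 < Znorm C Γ G y)
    (hint1 : Integrable (fun m => potential Γ G y (T m)) (gaussianOf 0 C))
    (hint2 : Integrable (fun m => Real.log (jac T m).det) (gaussianOf 0 C))
    (hint3 : Integrable (fun m => m ⬝ᵥ C⁻¹ *ᵥ (T m - m)) (gaussianOf 0 C))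
    (hint4 : Integrable (fun m => (T m - m) ⬝ᵥ C⁻¹ *ᵥ (T m - m)) (gaussianOf 0 C)) :
    Integrable (fun m =>
        Real.log (((gaussianOf 0 C).rnDeriv ((posterior C Γ G y).map Tinv) m).toReal))
      (gaussianOf 0 C) ∧
      KLdiv (gaussianOf 0 C) ((posterior C Γ G y).map Tinv) =
        (∫ m, (potential Γ G y (T m) - Real.log (jac T m).det +
            m ⬝ᵥ C⁻¹ *ᵥ (T m - m) +
            (1 / 2) * ((T m - m) ⬝ᵥ C⁻¹ *ᵥ (T m - m))) ∂(gaussianOf 0 C)) +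
          Real.log (Znorm C Γ G y) := by
  have := isProbabilityMeasure_gaussianOf hC
  have hlog := log_rnDeriv_gaussianOf_map_posterior_ae_eq hC hG.continuous
    (hT.differentiable one_ne_zero) hli hri hdet hZ
  have hint : Integrable (fun m => potential Γ G y (T m) - Real.log (jac T m).det +
      m ⬝ᵥ C⁻¹ *ᵥ (T m - m) + (1 / 2) * ((T m - m) ⬝ᵥ C⁻¹ *ᵥ (T m - m))) (gaussianOf 0 C) :=
    ((hint1.sub hint2).add hint3).add (hint4.const_mul (1 / 2))
  refine ⟨(hint.add (integrable_const _)).congr hlog.symm, ?_⟩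
  rw [KLdiv, integral_congr_ae hlog, integral_add hint (integrable_const _), integral_const,
    probReal_univ, one_smul]

/-- The reverse-KL transport objective identity:
`KL(μ ‖ T♯μʸ)` is finite and equals
`∫ [Φʸ(T m) − log det ∇T(m) + mᵀC⁻¹K(m) + ½K(m)ᵀC⁻¹K(m)] dμ(m) + log Zʸ`,
where `K := T − id` and `T♯μʸ` is the pushforward of `μʸ` under `T⁻¹`. -/
theorem rKL_pullback_objective_identity
    {n d : ℕ} (C : Matrix (Fin n) (Fin n) ℝ) (hC : C.PosDef)
    (Γ : Matrix (Fin d) (Fin d) ℝ) (hΓ : Γ.PosDef)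
    (G : (Fin n → ℝ) → (Fin d → ℝ)) (hG : ContDiff ℝ 1 G)
    (y : Fin d → ℝ)
    (T Tinv : (Fin n → ℝ) → (Fin n → ℝ))
    (hT : ContDiff ℝ 1 T) (hTinv : ContDiff ℝ 1 Tinv)
    (hli : Function.LeftInverse Tinv T) (hri : Function.RightInverse Tinv T)
    (hdet : ∀ m, 0 < (jac T m).det)
    (hZ : 0 < Znorm C Γ G y)
    (hint1 : Integrable (fun m => potential Γ G y (T m)) (gaussianOf 0 C))
    (hint2 : Integrable (fun m => Real.log (jac T m).det) (gaussianOf 0 C))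
    (hint3 : Integrable (fun m => m ⬝ᵥ C⁻¹ *ᵥ (T m - m)) (gaussianOf 0 C))
    (hint4 : Integrable (fun m => (T m - m) ⬝ᵥ C⁻¹ *ᵥ (T m - m)) (gaussianOf 0 C)) :
    Integrable (fun m =>
        Real.log (((gaussianOf 0 C).rnDeriv ((posterior C Γ G y).map Tinv) m).toReal))
      (gaussianOf 0 C) ∧
      KLdiv (gaussianOf 0 C) ((posterior C Γ G y).map Tinv) =
        (∫ m, (potential Γ G y (T m) - Real.log (jac T m).det +
            m ⬝ᵥ C⁻¹ *ᵥ (T m - m) +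
            (1 / 2) * ((T m - m) ⬝ᵥ C⁻¹ *ᵥ (T m - m))) ∂(gaussianOf 0 C)) +
          Real.log (Znorm C Γ G y) :=
  rKL_pullback_objective_identity_general C hC Γ G hG y T Tinv hT hli hri hdet hZ hint1 hint2 hint3
    hint4
end
end

section
/- Let π = N(0, I_r) on ℝʳ and let γ̂ be a probability measure on ℝ^d (the law of the whitened data). Let g_opt, g : ℝʳ → ℝ^d be continuously differentiable with ∫ [‖g_opt(z)‖² + ‖∇g_opt(z)‖_F²] dπ(z) < ∞ and ∫ [‖g(z)‖² + ‖∇g(z)‖_F²] dπ(z) < ∞. Let S : ℝʳ → ℝʳ be Borel measurable such that S#π is absolutely continuous with respect to π with d(S#π)/dπ ≤ C₁ π-a.e. for some constant C₁ ≥ 0, and let J : ℝʳ → ℝ^{r×p} be Borel measurable. Assume C₂ := ∫ ‖∇g(S(z)) J(z)‖_F² dπ(z) < ∞ and C₃ := ∫∫ ‖J(z)‖_F² ‖g_opt(S(z)) − w‖² dπ(z) dγ̂(w) < ∞. Then ∫∫ ‖ J(z)ᵀ [ ∇g_opt(S(z))ᵀ (g_opt(S(z)) − w) − ∇g(S(z))ᵀ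 (g(S(z)) − w) ] ‖ dπ(z) dγ̂(w) ≤ (√C₂ + √C₃) · √C₁ · ( ∫ [ ‖g_opt(z) − g(z)‖² + ‖∇g_opt(z) − ∇g(z)‖_F² ] dπ(z) )^{1/2}. -/
open MeasureTheory Matrix Real

noncomputable section

/-- Standard Gaussian `N(0, I_r)` on `ℝʳ`. -/
def stdGaussian (r : ℕ) : Measure (Fin r → ℝ) := gaussianOf 0 1

/-- Euclidean norm on `ℝᵏ`. -/
def eucNorm {k : ℕ} (v : Fin k → ℝ) : ℝ := Real.sqrt (v ⬝ᵥ v)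

/-- Squared Frobenius norm of a matrix. -/
def frobSq {a b : ℕ} (A : Matrix (Fin a) (Fin b) ℝ) : ℝ := ∑ i, ∑ j, (A i j) ^ 2

/-!
With `u = g_opt(S z) - w` and `v = g(S z) - w`, the integrand splits as
`Jᵀ (∇g_opt - ∇g)ᵀ u + (∇g · J)ᵀ (u - v)`, so pointwise it is at most
`(‖∇g(S z) J‖_F + ‖J‖_F ‖u‖) · e(S z)^{1/2}`, where `e = ‖g_opt - g‖² + ‖∇g_opt - ∇g‖_F²`
is the `H¹_π` integrand. Cauchy–Schwarz in `L²(γ̂ ⊗ π)` bounds the two resulting terms by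
`√C₂` and `√C₃` times `(∫ e ∘ S dπ)^{1/2}`, and the density bound on `S#π` gives
`∫ e ∘ S dπ ≤ C₁ ∫ e dπ`.
-/

open scoped ENNReal

lemma dotProduct_self_eq_sum_sq {ι : Type*} [Fintype ι] (v : ι → ℝ) :
    v ⬝ᵥ v = ∑ i, v i ^ 2 := by
  simp only [dotProduct, sq]

lemma dotProduct_self_nonneg {ι : Type*} [Fintype ι] (v : ι → ℝ) : 0 ≤ v ⬝ᵥ v := by
  rw [dotProduct_self_eq_sum_sq]; positivity

lemma frobSq_eq_sum_dotProduct {a b : ℕ} (A : Matrix (Fin a) (Fin b) ℝ) :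
    frobSq A = ∑ i, A i ⬝ᵥ A i := by
  simp only [frobSq, dotProduct_self_eq_sum_sq]

lemma frobSq_nonneg {a b : ℕ} (A : Matrix (Fin a) (Fin b) ℝ) : 0 ≤ frobSq A := by
  unfold frobSq; positivity

lemma eucNorm_nonneg {k : ℕ} (v : Fin k → ℝ) : 0 ≤ eucNorm v := Real.sqrt_nonneg _

lemma eucNorm_eq_norm {k : ℕ} (v : Fin k → ℝ) : eucNorm v = ‖WithLp.toLp 2 v‖ := by
  simp [EuclideanSpace.norm_eq, eucNorm, dotProduct_self_eq_sum_sq]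

lemma eucNorm_add_le {k : ℕ} (x y : Fin k → ℝ) : eucNorm (x + y) ≤ eucNorm x + eucNorm y := by
  simpa only [eucNorm_eq_norm, WithLp.toLp_add] using norm_add_le _ _

lemma eucNorm_transpose_mulVec_le {a b : ℕ} (M : Matrix (Fin a) (Fin b) ℝ) (v : Fin a → ℝ) :
    eucNorm (Mᵀ *ᵥ v) ≤ √(frobSq M) * eucNorm v := by
  rw [eucNorm, eucNorm, ← Real.sqrt_mul (frobSq_nonneg M)]
  refine Real.sqrt_le_sqrt ?_
  rw [dotProduct_self_eq_sum_sq, dotProduct_self_eq_sum_sq, frobSq, Finset.sum_comm,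
    Finset.sum_mul]
  refine Finset.sum_le_sum fun j _ => ?_
  simpa only [mulVec, dotProduct, transpose_apply] using
    Finset.sum_mul_sq_le_sq_mul_sq Finset.univ (fun i => M i j) v

lemma sub_dotProduct_sub_le {ι : Type*} [Fintype ι] (x y : ι → ℝ) :
    (x - y) ⬝ᵥ (x - y) ≤ 2 * (x ⬝ᵥ x) + 2 * (y ⬝ᵥ y) := by
  simp only [dotProduct_self_eq_sum_sq, Finset.mul_sum, ← Finset.sum_add_distrib, Pi.sub_apply]
  exact Finset.sum_le_sum fun i _ => by nlinarith [sq_nonneg (x i + y i)]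

lemma frobSq_sub_le {a b : ℕ} (A B : Matrix (Fin a) (Fin b) ℝ) :
    frobSq (A - B) ≤ 2 * frobSq A + 2 * frobSq B := by
  simp only [frobSq_eq_sum_dotProduct, Finset.mul_sum, ← Finset.sum_add_distrib]
  exact Finset.sum_le_sum fun i _ => sub_dotProduct_sub_le (A i) (B i)

lemma eucNorm_mulVec_transpose_sub_le {r d p : ℕ} (J : Matrix (Fin r) (Fin p) ℝ)
    (A B : Matrix (Fin d) (Fin r) ℝ) (u v : Fin d → ℝ) :
    eucNorm (Jᵀ *ᵥ (Aᵀ *ᵥ u - Bᵀ *ᵥ v)) ≤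
      (√(frobSq (B * J)) + √(frobSq J * (u ⬝ᵥ u))) *
        √((u - v) ⬝ᵥ (u - v) + frobSq (A - B)) := by
  have hsplit : Jᵀ *ᵥ (Aᵀ *ᵥ u - Bᵀ *ᵥ v) = (B * J)ᵀ *ᵥ (u - v) + Jᵀ *ᵥ ((A - B)ᵀ *ᵥ u) := by
    rw [transpose_mul, ← mulVec_mulVec, ← mulVec_add]
    congr 1
    rw [transpose_sub, sub_mulVec, mulVec_sub]
    abel
  have hvec : eucNorm (u - v) ≤ √((u - v) ⬝ᵥ (u - v) + frobSq (A - B)) :=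
    Real.sqrt_le_sqrt (le_add_of_nonneg_right (frobSq_nonneg _))
  have hmat : √(frobSq (A - B)) ≤ √((u - v) ⬝ᵥ (u - v) + frobSq (A - B)) :=
    Real.sqrt_le_sqrt (le_add_of_nonneg_left (dotProduct_self_nonneg _))
  have hfirst := eucNorm_transpose_mulVec_le (B * J) (u - v)
  have hsecond : eucNorm (Jᵀ *ᵥ ((A - B)ᵀ *ᵥ u)) ≤ √(frobSq J * (u ⬝ᵥ u)) * √(frobSq (A - B)) := by
    calc eucNorm (Jᵀ *ᵥ ((A - B)ᵀ *ᵥ u))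
        ≤ √(frobSq J) * (√(frobSq (A - B)) * eucNorm u) :=
          (eucNorm_transpose_mulVec_le J _).trans
            (mul_le_mul_of_nonneg_left (eucNorm_transpose_mulVec_le _ u) (Real.sqrt_nonneg _))
      _ = √(frobSq J * (u ⬝ᵥ u)) * √(frobSq (A - B)) := by
          rw [Real.sqrt_mul (frobSq_nonneg J), eucNorm]; ring
  rw [hsplit, add_mul]
  refine (eucNorm_add_le _ _).trans (add_le_add ?_ ?_)
  · exact hfirst.trans (mul_le_mul_of_nonneg_left hvec (Real.sqrt_nonneg _))
  · exact hsecond.trans (mul_le_mul_of_nonneg_left hmat (Real.sqrt_nonneg _))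

section Integration

variable {α β : Type*} [MeasurableSpace α] [MeasurableSpace β]

lemma integrable_sub_dotProduct_add_frobSq_sub {μ : Measure α} {k a b : ℕ}
    {u v : α → Fin k → ℝ} {A B : α → Matrix (Fin a) (Fin b) ℝ}
    (hu : Integrable (fun x => u x ⬝ᵥ u x + frobSq (A x)) μ)
    (hv : Integrable (fun x => v x ⬝ᵥ v x + frobSq (B x)) μ)
    (hm : AEStronglyMeasurable (fun x => (u x - v x) ⬝ᵥ (u x - v x) + frobSq (A x - B x)) μ) :
    Integrable (fun x => (u x - v x) ⬝ᵥ (u x - v x) + frobSq (A x - B x)) μ := by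
  refine Integrable.mono' ((hu.add hv).const_mul 2) hm (ae_of_all _ fun x => ?_)
  rw [Real.norm_of_nonneg (add_nonneg (dotProduct_self_nonneg _) (frobSq_nonneg _)),
    Pi.add_apply]
  linarith [sub_dotProduct_sub_le (u x) (v x), frobSq_sub_le (A x) (B x)]

lemma ofReal_sqrt_eq_rpow_half (x : ℝ) : ENNReal.ofReal √x = ENNReal.ofReal x ^ (1 / 2 : ℝ) := by
  rcases le_total 0 x with hx | hx
  · rw [ENNReal.ofReal_rpow_of_nonneg hx (by norm_num), Real.sqrt_eq_rpow]
  · rw [Real.sqrt_eq_zero'.mpr hx, ENNReal.ofReal_of_nonpos hx, ENNReal.ofReal_zero,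
      ENNReal.zero_rpow_of_pos (by norm_num)]

lemma lintegral_comp_le_of_rnDeriv_le {μ : Measure α} [SigmaFinite μ] {S : α → α} {c : ℝ≥0∞}
    (hS : Measurable S) (hac : μ.map S ≪ μ) (hbound : ∀ᵐ x ∂μ, (μ.map S).rnDeriv μ x ≤ c)
    {f : α → ℝ≥0∞} (hf : Measurable f) :
    ∫⁻ x, f (S x) ∂μ ≤ c * ∫⁻ x, f x ∂μ := by
  rw [← lintegral_map hf hS, ← lintegral_rnDeriv_mul hac hf.aemeasurable,
    ← lintegral_const_mul _ hf]
  refine lintegral_mono_ae ?_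
  filter_upwards [hbound] with x hx
  exact mul_le_mul_left hx _

lemma lintegral_sqrt_mul_sqrt_comp_le {ν : Measure β} [IsProbabilityMeasure ν]
    {μ : Measure α} [SigmaFinite μ] {S : α → α} {C : ℝ} (hS : Measurable S) (hac : μ.map S ≪ μ)
    (hbound : ∀ᵐ x ∂μ, (μ.map S).rnDeriv μ x ≤ ENNReal.ofReal C)
    {a : β × α → ℝ} {b : α → ℝ} (ha : Integrable a (ν.prod μ)) (ha0 : ∀ q, 0 ≤ a q)
    (hb : Measurable b) (hbi : Integrable b μ) (hb0 : ∀ x, 0 ≤ b x) :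
    ∫⁻ q, ENNReal.ofReal (√(a q) * √(b (S q.2))) ∂(ν.prod μ) ≤
      ENNReal.ofReal (√(∫ q, a q ∂(ν.prod μ)) * (√C * √(∫ x, b x ∂μ))) := by
  have hsq : ∀ x : ℝ, 0 ≤ x → ENNReal.ofReal √x ^ (2 : ℝ) = ENNReal.ofReal x := fun x hx => by
    rw [ENNReal.rpow_two, ← ENNReal.ofReal_pow (Real.sqrt_nonneg x), Real.sq_sqrt hx]
  have hHolder := ENNReal.lintegral_mul_le_Lp_mul_Lq (ν.prod μ) Real.HolderConjugate.two_two
    ha.aemeasurable.sqrt.ennreal_ofReal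
    ((hb.comp hS).comp measurable_snd).sqrt.ennreal_ofReal.aemeasurable
  simp only [Pi.mul_apply, Function.comp_apply, ← ENNReal.ofReal_mul (Real.sqrt_nonneg _),
    hsq _ (ha0 _), hsq _ (hb0 _)] at hHolder
  have hmarg : ∫⁻ q, ENNReal.ofReal (b (S q.2)) ∂(ν.prod μ) = ∫⁻ x, ENNReal.ofReal (b (S x)) ∂μ :=
    measurePreserving_snd.lintegral_comp (hb.comp hS).ennreal_ofReal
  refine hHolder.trans ?_
  rw [hmarg, ← ofReal_integral_eq_lintegral_ofReal ha (ae_of_all _ ha0)]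
  calc _ ≤ ENNReal.ofReal (∫ q, a q ∂(ν.prod μ)) ^ (1 / 2 : ℝ) *
          (ENNReal.ofReal C * ENNReal.ofReal (∫ x, b x ∂μ)) ^ (1 / 2 : ℝ) := by
        rw [ofReal_integral_eq_lintegral_ofReal hbi (ae_of_all _ hb0)]
        exact mul_le_mul_right (ENNReal.rpow_le_rpow
          (lintegral_comp_le_of_rnDeriv_le hS hac hbound hb.ennreal_ofReal) (by norm_num)) _
    _ = _ := by
        rw [ENNReal.mul_rpow_of_nonneg _ _ (by norm_num), ENNReal.ofReal_mul (Real.sqrt_nonneg _),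
          ENNReal.ofReal_mul (Real.sqrt_nonneg _)]
        simp only [ofReal_sqrt_eq_rpow_half]

lemma integral_integral_le_of_lintegral_prod_le {ν : Measure β} {μ : Measure α} [SFinite μ]
    {F : β × α → ℝ} (hF0 : ∀ q, 0 ≤ F q) (hF : AEMeasurable F (ν.prod μ)) {R : ℝ} (hR : 0 ≤ R)
    (h : ∫⁻ q, ENNReal.ofReal (F q) ∂(ν.prod μ) ≤ ENNReal.ofReal R) :
    ∫ w, ∫ z, F (w, z) ∂μ ∂ν ≤ R := by
  have hinner : ∀ w, ‖∫ z, F (w, z) ∂μ‖ ≤ (∫⁻ z, ENNReal.ofReal (F (w, z)) ∂μ).toReal := by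
    intro w
    simpa only [Real.norm_of_nonneg (hF0 _)] using norm_integral_le_lintegral_norm fun z => F (w, z)
  calc ∫ w, ∫ z, F (w, z) ∂μ ∂ν
      ≤ (∫⁻ w, ENNReal.ofReal ‖∫ z, F (w, z) ∂μ‖ ∂ν).toReal :=
        (Real.le_norm_self _).trans (norm_integral_le_lintegral_norm _)
    _ ≤ (∫⁻ q, ENNReal.ofReal (F q) ∂(ν.prod μ)).toReal := by
        refine ENNReal.toReal_mono (ne_top_of_le_ne_top ENNReal.ofReal_ne_top h) ?_
        rw [lintegral_prod _ hF.ennreal_ofReal]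
        exact lintegral_mono fun w => (ENNReal.ofReal_le_ofReal (hinner w)).trans
          ENNReal.ofReal_toReal_le
    _ ≤ R := ENNReal.toReal_le_of_le_ofReal hR h

lemma lintegral_ofReal_le_of_le_sqrt_add_sqrt_mul_sqrt_comp {ν : Measure β}
    [IsProbabilityMeasure ν] {μ : Measure α} [SigmaFinite μ] {S : α → α} {C : ℝ}
    (hS : Measurable S) (hac : μ.map S ≪ μ)
    (hbound : ∀ᵐ x ∂μ, (μ.map S).rnDeriv μ x ≤ ENNReal.ofReal C)
    {a₁ a₂ F : β × α → ℝ} {b : α → ℝ}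
    (ha₁ : Integrable a₁ (ν.prod μ)) (ha₁0 : ∀ q, 0 ≤ a₁ q)
    (ha₂ : Integrable a₂ (ν.prod μ)) (ha₂0 : ∀ q, 0 ≤ a₂ q)
    (hb : Measurable b) (hbi : Integrable b μ) (hb0 : ∀ x, 0 ≤ b x)
    (hF : ∀ q, F q ≤ (√(a₁ q) + √(a₂ q)) * √(b (S q.2))) :
    ∫⁻ q, ENNReal.ofReal (F q) ∂(ν.prod μ) ≤
      ENNReal.ofReal ((√(∫ q, a₁ q ∂(ν.prod μ)) + √(∫ q, a₂ q ∂(ν.prod μ))) * √C *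
        √(∫ x, b x ∂μ)) := by
  calc ∫⁻ q, ENNReal.ofReal (F q) ∂(ν.prod μ)
      ≤ ∫⁻ q, (ENNReal.ofReal (√(a₁ q) * √(b (S q.2))) +
          ENNReal.ofReal (√(a₂ q) * √(b (S q.2)))) ∂(ν.prod μ) :=
        lintegral_mono fun q =>
          (ENNReal.ofReal_le_ofReal ((hF q).trans_eq (add_mul _ _ _))).trans ENNReal.ofReal_add_le
    _ = _ := lintegral_add_right' _ (ha₂.aemeasurable.sqrt.mul
        ((hb.comp hS).comp measurable_snd).sqrt.aemeasurable).ennreal_ofReal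
    _ ≤ _ := add_le_add (lintegral_sqrt_mul_sqrt_comp_le hS hac hbound ha₁ ha₁0 hb hbi hb0)
        (lintegral_sqrt_mul_sqrt_comp_le hS hac hbound ha₂ ha₂0 hb hbi hb0)
    _ = _ := by
        rw [← ENNReal.ofReal_add (by positivity) (by positivity)]
        ring_nf

end Integration

instance (r : ℕ) : SigmaFinite (stdGaussian r) :=
  SigmaFinite.withDensity_of_ne_top (ae_of_all _ fun _ => ENNReal.ofReal_ne_top)

theorem rKL_gradient_error_bound_general
    {r d p : ℕ} (γhat : Measure (Fin d → ℝ)) [IsProbabilityMeasure γhat]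
    (gopt g : (Fin r → ℝ) → (Fin d → ℝ))
    (hgopt : ContDiff ℝ 1 gopt) (hg : ContDiff ℝ 1 g)
    (hgoptInt : Integrable (fun z => gopt z ⬝ᵥ gopt z + frobSq (jac gopt z)) (stdGaussian r))
    (hgInt : Integrable (fun z => g z ⬝ᵥ g z + frobSq (jac g z)) (stdGaussian r))
    (S : (Fin r → ℝ) → (Fin r → ℝ)) (hS : Measurable S)
    (C₁ : ℝ)
    (hac : (stdGaussian r).map S ≪ stdGaussian r)
    (hbound : ∀ᵐ z ∂(stdGaussian r),
      ((stdGaussian r).map S).rnDeriv (stdGaussian r) z ≤ ENNReal.ofReal C₁)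
    (J : (Fin r → ℝ) → Matrix (Fin r) (Fin p) ℝ)
    (hJ : ∀ i j, Measurable fun z => J z i j)
    (hC₂ : Integrable (fun z => frobSq ((jac g (S z)) * J z)) (stdGaussian r))
    (hC₃ : Integrable (fun q : (Fin d → ℝ) × (Fin r → ℝ) =>
        frobSq (J q.2) * ((gopt (S q.2) - q.1) ⬝ᵥ (gopt (S q.2) - q.1)))
      (γhat.prod (stdGaussian r))) :
    (∫ w, ∫ z,
        eucNorm ((J z)ᵀ *ᵥ
          ((jac gopt (S z))ᵀ *ᵥ (gopt (S z) - w) - (jac g (S z))ᵀ *ᵥ (g (S z) - w)))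
        ∂(stdGaussian r) ∂γhat) ≤
      (Real.sqrt (∫ z, frobSq ((jac g (S z)) * J z) ∂(stdGaussian r)) +
          Real.sqrt (∫ w, ∫ z,
            frobSq (J z) * ((gopt (S z) - w) ⬝ᵥ (gopt (S z) - w))
            ∂(stdGaussian r) ∂γhat)) *
        Real.sqrt C₁ *
        Real.sqrt (∫ z, ((gopt z - g z) ⬝ᵥ (gopt z - g z) +
          frobSq (jac gopt z - jac g z)) ∂(stdGaussian r)) := by
  have hgopt_cont := hgopt.continuous
  have hg_cont := hg.continuous
  set e : (Fin r → ℝ) → ℝ := fun z =>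
    (gopt z - g z) ⬝ᵥ (gopt z - g z) + frobSq (jac gopt z - jac g z) with he_def
  set Φ : (Fin d → ℝ) × (Fin r → ℝ) → ℝ := fun q => eucNorm ((J q.2)ᵀ *ᵥ
    ((jac gopt (S q.2))ᵀ *ᵥ (gopt (S q.2) - q.1) - (jac g (S q.2))ᵀ *ᵥ (g (S q.2) - q.1)))
  have he : Measurable e := by
    simp only [he_def, dotProduct, frobSq, jac, Matrix.sub_apply, of_apply, Pi.sub_apply]
    fun_prop
  have hΦ : Measurable Φ := by
    simp only [Φ, eucNorm, dotProduct, mulVec, transpose_apply, jac, of_apply, Pi.sub_apply]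
    fun_prop
  have hpt : ∀ q, Φ q ≤ (√(frobSq (jac g (S q.2) * J q.2)) +
      √(frobSq (J q.2) * ((gopt (S q.2) - q.1) ⬝ᵥ (gopt (S q.2) - q.1)))) * √(e (S q.2)) := by
    intro q
    simpa only [sub_sub_sub_cancel_right] using eucNorm_mulVec_transpose_sub_le (J q.2)
      (jac gopt (S q.2)) (jac g (S q.2)) (gopt (S q.2) - q.1) (g (S q.2) - q.1)
  have hC₂' : ∫ q : (Fin d → ℝ) × (Fin r → ℝ), frobSq (jac g (S q.2) * J q.2)
      ∂(γhat.prod (stdGaussian r)) = ∫ z, frobSq (jac g (S z) * J z) ∂(stdGaussian r) :=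
    (integral_fun_snd fun z => frobSq (jac g (S z) * J z)).trans (by simp)
  refine integral_integral_le_of_lintegral_prod_le (F := Φ) (fun _ => eucNorm_nonneg _)
    hΦ.aemeasurable (by positivity) ?_
  rw [← hC₂', ← integral_prod _ hC₃]
  exact lintegral_ofReal_le_of_le_sqrt_add_sqrt_mul_sqrt_comp hS hac hbound
    (hC₂.comp_snd γhat) (fun _ => frobSq_nonneg _)
    hC₃ (fun _ => mul_nonneg (frobSq_nonneg _) (dotProduct_self_nonneg _))
    he (integrable_sub_dotProduct_add_frobSq_sub hgoptInt hgInt he.aestronglyMeasurable)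
    (fun _ => add_nonneg (dotProduct_self_nonneg _) (frobSq_nonneg _)) hpt

/-- Theorem 3.2: surrogate approximation of the rKL objective
gradient, with explicit constants. -/
theorem rKL_gradient_error_bound
    {r d p : ℕ} (γhat : Measure (Fin d → ℝ)) [IsProbabilityMeasure γhat]
    (gopt g : (Fin r → ℝ) → (Fin d → ℝ))
    (hgopt : ContDiff ℝ 1 gopt) (hg : ContDiff ℝ 1 g)
    (hgoptInt : Integrable (fun z => gopt z ⬝ᵥ gopt z + frobSq (jac gopt z)) (stdGaussian r))
    (hgInt : Integrable (fun z => g z ⬝ᵥ g z + frobSq (jac g z)) (stdGaussian r))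
    (S : (Fin r → ℝ) → (Fin r → ℝ)) (hS : Measurable S)
    (C₁ : ℝ) (hC₁ : 0 ≤ C₁)
    (hac : (stdGaussian r).map S ≪ stdGaussian r)
    (hbound : ∀ᵐ z ∂(stdGaussian r),
      ((stdGaussian r).map S).rnDeriv (stdGaussian r) z ≤ ENNReal.ofReal C₁)
    (J : (Fin r → ℝ) → Matrix (Fin r) (Fin p) ℝ)
    (hJ : ∀ i j, Measurable fun z => J z i j)
    (hC₂ : Integrable (fun z => frobSq ((jac g (S z)) * J z)) (stdGaussian r))
    (hC₃ : Integrable (fun q : (Fin d → ℝ) × (Fin r → ℝ) =>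
        frobSq (J q.2) * ((gopt (S q.2) - q.1) ⬝ᵥ (gopt (S q.2) - q.1)))
      (γhat.prod (stdGaussian r))) :
    (∫ w, ∫ z,
        eucNorm ((J z)ᵀ *ᵥ
          ((jac gopt (S z))ᵀ *ᵥ (gopt (S z) - w) - (jac g (S z))ᵀ *ᵥ (g (S z) - w)))
        ∂(stdGaussian r) ∂γhat) ≤
      (Real.sqrt (∫ z, frobSq ((jac g (S z)) * J z) ∂(stdGaussian r)) +
          Real.sqrt (∫ w, ∫ z,
            frobSq (J z) * ((gopt (S z) - w) ⬝ᵥ (gopt (S z) - w))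
            ∂(stdGaussian r) ∂γhat)) *
        Real.sqrt C₁ *
        Real.sqrt (∫ z, ((gopt z - g z) ⬝ᵥ (gopt z - g z) +
          frobSq (jac gopt z - jac g z)) ∂(stdGaussian r)) :=
  rKL_gradient_error_bound_general γhat gopt g hgopt hg hgoptInt hgInt S hS C₁ hac hbound J hJ hC₂
    hC₃
end
end

section
/- Let (Y, 𝔅, γ) be a probability space of data. For each y ∈ Y let L^y : ℝᵖ → ℝ be twice continuously differentiable and L̃^y : ℝᵖ → ℝ be differentiable, and let θ†, θ̃† : Y → ℝᵖ be measurable maps. Let R > 0 and λ > 0. Assume for γ-almost every y: (i) ‖θ̃†(y) − θ†(y)‖ ≤ R; (ii) for every θ with ‖θ − θ†(y)‖ ≤ R, the Hessian satisfies ∇²L^y(θ) ⪰ λ I_p (i.e., ∇²L^y(θ) − λ I_p is positive semidefinite); (iii) ∇L^y(θ†(y)) = 0 and ∇L̃^y(θ̃†(y)) = 0. Assume further that the functions y ↦ L^y(θ̃†(y)) − L^y(θ†(y)) and y ↦ ‖∇L^y(θ̃†(y)) − ∇L̃^y(θ̃†(y))‖ are measurable. Then for γ-a.e. y one has L^y(θ̃†(y))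 − L^y(θ†(y)) ≥ 0, and ∫ √( L^y(θ̃†(y)) − L^y(θ†(y)) ) dγ(y) ≤ (2λ)^{-1/2} ∫ ‖ ∇L^y(θ̃†(y)) − ∇L̃^y(θ̃†(y)) ‖ dγ(y). -/
/-!
On the ball `B = closedBall θ† R` the Hessian bound `∇²L ⪰ λ` makes `L` `λ`-strongly convex:
`L a + ⟪∇L a, b - a⟫ + λ/2 ‖b - a‖² ≤ L b` for `a, b ∈ B`, obtained by Taylor expansion along the
segment from `a` to `b`. With `a = θ†`, a stationary point, this shows `θ†` minimises `L` on `B`,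
so the gap is nonnegative. With the roles swapped and the square completed it gives the
Polyak–Łojasiewicz inequality `L θ̃† - L θ† ≤ ‖∇L θ̃†‖² / (2λ)`, and `∇L̃ θ̃† = 0` turns `‖∇L θ̃†‖`
into `‖∇L θ̃† - ∇L̃ θ̃†‖`. Taking square roots and integrating gives the bound.
-/

open MeasureTheory RealInnerProductSpace Set

noncomputable section

theorem add_deriv_add_half_le_of_le_deriv2 {φ φ' φ'' : ℝ → ℝ} {m : ℝ}
    (hφ : ∀ t, HasDerivAt φ (φ' t) t) (hφ' : ∀ t, HasDerivAt φ' (φ'' t) t)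
    (hm : ∀ t ∈ Ioo (0 : ℝ) 1, m ≤ φ'' t) :
    φ 0 + φ' 0 + m / 2 ≤ φ 1 := by
  have hφ'_cont : Continuous φ' := continuous_iff_continuousAt.2 fun t ↦ (hφ' t).continuousAt
  have hslope : ∀ t ∈ Icc (0 : ℝ) 1, m * t ≤ φ' t - φ' 0 := fun t ht ↦ by
    simpa using (convex_Icc (0 : ℝ) 1).mul_sub_le_image_sub_of_le_deriv
      hφ'_cont.continuousOn (fun t _ ↦ (hφ' t).differentiableAt.differentiableWithinAt)
      (fun t ht ↦ by rw [interior_Icc] at ht; rw [(hφ' t).deriv]; exact hm t ht)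
      0 (left_mem_Icc.2 zero_le_one) t ht ht.1
  set ψ : ℝ → ℝ := fun s ↦ φ s - φ' 0 * s - m / 2 * s ^ 2
  have hψ : ∀ t, HasDerivAt ψ (φ' t - φ' 0 - m * t) t := fun t ↦
    (((hφ t).sub ((hasDerivAt_id t).const_mul (φ' 0))).sub
      ((hasDerivAt_pow 2 t).const_mul (m / 2))).congr_deriv (by norm_num; ring)
  have hψ_mono : MonotoneOn ψ (Icc 0 1) :=
    monotoneOn_of_hasDerivWithinAt_nonneg (convex_Icc 0 1)
      (fun t _ ↦ (hψ t).continuousAt.continuousWithinAt) (fun t _ ↦ (hψ t).hasDerivWithinAt)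
      (fun t ht ↦ by
        rw [interior_Icc] at ht
        linarith [hslope t (Ioo_subset_Icc_self ht)])
  have hψ01 := hψ_mono (left_mem_Icc.2 zero_le_one) (right_mem_Icc.2 zero_le_one) zero_le_one
  simp only [ψ] at hψ01
  linarith

section StrongConvexity

variable {E : Type*} [NormedAddCommGroup E] [InnerProductSpace ℝ E] [CompleteSpace E]
  {f : E → ℝ} {s : Set E} {m : ℝ} {a b : E}

theorem ContDiff.differentiable_gradient (hf : ContDiff ℝ 2 f) :
    Differentiable ℝ (gradient f) :=
  (InnerProductSpace.toDual ℝ E).symm.toContinuousLinearEquiv.differentiable.comp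
    ((hf.fderiv_right (m := 1) (by norm_num)).differentiable one_ne_zero)

theorem Convex.add_inner_gradient_add_half_mul_sq_le (hf : Differentiable ℝ f)
    (hgf : Differentiable ℝ (gradient f)) (hs : Convex ℝ s)
    (hH : ∀ x ∈ s, ∀ v, m * ‖v‖ ^ 2 ≤ ⟪v, fderiv ℝ (gradient f) x v⟫) (ha : a ∈ s) (hb : b ∈ s) :
    f a + ⟪gradient f a, b - a⟫ + m / 2 * ‖b - a‖ ^ 2 ≤ f b := by
  set v := b - a
  set c : ℝ → E := fun t ↦ a + t • v
  have hc : ∀ t, HasDerivAt c v t := fun t ↦ by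
    simpa only [id_eq, one_smul] using ((hasDerivAt_id t).smul_const v).const_add a
  have hφ : ∀ t, HasDerivAt (fun t ↦ f (c t)) ⟪gradient f (c t), v⟫ t := fun t ↦ by
    rw [inner_gradient_left]
    exact (hf (c t)).hasFDerivAt.comp_hasDerivAt t (hc t)
  have hφ' : ∀ t, HasDerivAt (fun t ↦ ⟪gradient f (c t), v⟫)
      ⟪fderiv ℝ (gradient f) (c t) v, v⟫ t := fun t ↦ by
    simpa using ((hgf (c t)).hasFDerivAt.comp_hasDerivAt t (hc t)).inner ℝ (hasDerivAt_const t v)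
  have hm : ∀ t ∈ Ioo (0 : ℝ) 1, m * ‖v‖ ^ 2 ≤ ⟪fderiv ℝ (gradient f) (c t) v, v⟫ :=
    fun t ht ↦ real_inner_comm v _ ▸ hH _ (hs.add_smul_sub_mem ha hb (Ioo_subset_Icc_self ht)) v
  have key := add_deriv_add_half_le_of_le_deriv2 hφ hφ' hm
  simp only [c, zero_smul, add_zero, one_smul, v, add_sub_cancel] at key
  linarith

theorem Convex.isMinOn_of_gradient_eq_zero (hf : Differentiable ℝ f)
    (hgf : Differentiable ℝ (gradient f)) (hs : Convex ℝ s)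
    (hH : ∀ x ∈ s, ∀ v, m * ‖v‖ ^ 2 ≤ ⟪v, fderiv ℝ (gradient f) x v⟫) (hm : 0 ≤ m)
    (ha : a ∈ s) (h0 : gradient f a = 0) : IsMinOn f s a :=
  isMinOn_iff.2 fun b hb ↦ by
    have := hs.add_inner_gradient_add_half_mul_sq_le hf hgf hH ha hb
    rw [h0, inner_zero_left] at this
    nlinarith [mul_nonneg hm (sq_nonneg ‖b - a‖)]

omit [CompleteSpace E] in
theorem neg_sq_norm_div_le_inner_add_half_mul_sq (g d : E) (hm : 0 < m) :
    -(‖g‖ ^ 2 / (2 * m)) ≤ ⟪g, d⟫ + m / 2 * ‖d‖ ^ 2 := by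
  have hsq : 0 ≤ ‖g + m • d‖ ^ 2 := sq_nonneg _
  rw [norm_add_sq_real, real_inner_smul_right, norm_smul, mul_pow, Real.norm_eq_abs, sq_abs] at hsq
  rw [neg_le, le_div_iff₀ (by positivity)]
  nlinarith

theorem Convex.sub_le_sq_norm_gradient_div (hf : Differentiable ℝ f)
    (hgf : Differentiable ℝ (gradient f)) (hs : Convex ℝ s)
    (hH : ∀ x ∈ s, ∀ v, m * ‖v‖ ^ 2 ≤ ⟪v, fderiv ℝ (gradient f) x v⟫) (hm : 0 < m)
    (ha : a ∈ s) (hb : b ∈ s) :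
    f b - f a ≤ ‖gradient f b‖ ^ 2 / (2 * m) := by
  have := hs.add_inner_gradient_add_half_mul_sq_le hf hgf hH hb ha
  linarith [neg_sq_norm_div_le_inner_add_half_mul_sq (gradient f b) (a - b) hm]

theorem Convex.sqrt_sub_le_inv_sqrt_mul_norm_gradient (hf : Differentiable ℝ f)
    (hgf : Differentiable ℝ (gradient f)) (hs : Convex ℝ s)
    (hH : ∀ x ∈ s, ∀ v, m * ‖v‖ ^ 2 ≤ ⟪v, fderiv ℝ (gradient f) x v⟫) (hm : 0 < m)
    (ha : a ∈ s) (hb : b ∈ s) :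
    √(f b - f a) ≤ (√(2 * m))⁻¹ * ‖gradient f b‖ :=
  calc √(f b - f a) ≤ √(‖gradient f b‖ ^ 2 / (2 * m)) :=
        Real.sqrt_le_sqrt (hs.sub_le_sq_norm_gradient_div hf hgf hH hm ha hb)
    _ = (√(2 * m))⁻¹ * ‖gradient f b‖ := by
        rw [Real.sqrt_div' _ (by positivity), Real.sqrt_sq (norm_nonneg _), div_eq_inv_mul]

end StrongConvexity

theorem lintegral_ofReal_le_ofReal_mul_lintegral_of_ae_le {α : Type*} [MeasurableSpace α]
    {μ : Measure α} {F G : α → ℝ} {c : ℝ} (hc : 0 ≤ c) (h : ∀ᵐ x ∂μ, F x ≤ c * G x) :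
    ∫⁻ x, ENNReal.ofReal (F x) ∂μ ≤ ENNReal.ofReal c * ∫⁻ x, ENNReal.ofReal (G x) ∂μ :=
  calc ∫⁻ x, ENNReal.ofReal (F x) ∂μ ≤ ∫⁻ x, ENNReal.ofReal c * ENNReal.ofReal (G x) ∂μ :=
        lintegral_mono_ae <| h.mono fun x hx ↦ by
          rw [← ENNReal.ofReal_mul hc]
          exact ENNReal.ofReal_le_ofReal hx
    _ = ENNReal.ofReal c * ∫⁻ x, ENNReal.ofReal (G x) ∂μ :=
        lintegral_const_mul' _ _ ENNReal.ofReal_ne_top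

theorem optimality_gap_bound_general
    {p : ℕ} {Y : Type*} [MeasurableSpace Y] (γ : Measure Y)
    (L Lt : Y → EuclideanSpace ℝ (Fin p) → ℝ)
    (hL : ∀ y, ContDiff ℝ 2 (L y))
    (θd θtd : Y → EuclideanSpace ℝ (Fin p))
    (R lam : ℝ) (hR : 0 < R) (hlam : 0 < lam)
    (h1 : ∀ᵐ y ∂γ, ‖θtd y - θd y‖ ≤ R)
    (h2 : ∀ᵐ y ∂γ, ∀ θ : EuclideanSpace ℝ (Fin p), ‖θ - θd y‖ ≤ R →
      ∀ v : EuclideanSpace ℝ (Fin p), lam * ‖v‖ ^ 2 ≤ ⟪v, fderiv ℝ (gradient (L y)) θ v⟫)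
    (h3 : ∀ᵐ y ∂γ, gradient (L y) (θd y) = 0 ∧ gradient (Lt y) (θtd y) = 0) :
    (∀ᵐ y ∂γ, 0 ≤ L y (θtd y) - L y (θd y)) ∧
      ∫⁻ y, ENNReal.ofReal (Real.sqrt (L y (θtd y) - L y (θd y))) ∂γ ≤
        ENNReal.ofReal ((Real.sqrt (2 * lam))⁻¹) *
          ∫⁻ y, ENNReal.ofReal ‖gradient (L y) (θtd y) - gradient (Lt y) (θtd y)‖ ∂γ := by
  have hpt : ∀ᵐ y ∂γ, 0 ≤ L y (θtd y) - L y (θd y) ∧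
      √(L y (θtd y) - L y (θd y)) ≤
        (√(2 * lam))⁻¹ * ‖gradient (L y) (θtd y) - gradient (Lt y) (θtd y)‖ := by
    filter_upwards [h1, h2, h3] with y hy1 hy2 ⟨hstat, hstat_t⟩
    have hs := convex_closedBall (θd y) R
    have hH : ∀ x ∈ Metric.closedBall (θd y) R, ∀ v,
        lam * ‖v‖ ^ 2 ≤ ⟪v, fderiv ℝ (gradient (L y)) x v⟫ :=
      fun x hx ↦ hy2 x (mem_closedBall_iff_norm.1 hx)
    have ha := Metric.mem_closedBall_self (x := θd y) hR.le
    have hb := mem_closedBall_iff_norm.2 hy1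
    have hLd := (hL y).differentiable two_ne_zero
    have hgLd := (hL y).differentiable_gradient
    refine ⟨sub_nonneg.2 ((hs.isMinOn_of_gradient_eq_zero hLd hgLd hH hlam.le ha hstat) hb), ?_⟩
    rw [hstat_t, sub_zero]
    exact hs.sqrt_sub_le_inv_sqrt_mul_norm_gradient hLd hgLd hH hlam ha hb
  exact ⟨hpt.mono fun _ hy ↦ hy.1,
    lintegral_ofReal_le_ofReal_mul_lintegral_of_ae_le (by positivity) (hpt.mono fun _ hy ↦ hy.2)⟩

/-- Corollary 3.3: optimality gap for surrogate-driven lazy map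
variational inference, with the explicit Polyak–Łojasiewicz constant.
For γ-a.e. `y` the gap `Lʸ(θ̃†(y)) − Lʸ(θ†(y))` is nonnegative, and
`∫ √(Lʸ(θ̃†) − Lʸ(θ†)) dγ ≤ (2λ)^{-1/2} ∫ ‖∇Lʸ(θ̃†) − ∇L̃ʸ(θ̃†)‖ dγ`. -/
theorem optimality_gap_bound
    {p : ℕ} {Y : Type*} [MeasurableSpace Y] (γ : Measure Y) [IsProbabilityMeasure γ]
    (L Lt : Y → EuclideanSpace ℝ (Fin p) → ℝ)
    (hL : ∀ y, ContDiff ℝ 2 (L y)) (hLt : ∀ y, Differentiable ℝ (Lt y))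
    (θd θtd : Y → EuclideanSpace ℝ (Fin p))
    (hθd : Measurable θd) (hθtd : Measurable θtd)
    (R lam : ℝ) (hR : 0 < R) (hlam : 0 < lam)
    (h1 : ∀ᵐ y ∂γ, ‖θtd y - θd y‖ ≤ R)
    (h2 : ∀ᵐ y ∂γ, ∀ θ : EuclideanSpace ℝ (Fin p), ‖θ - θd y‖ ≤ R →
      ∀ v : EuclideanSpace ℝ (Fin p), lam * ‖v‖ ^ 2 ≤ ⟪v, fderiv ℝ (gradient (L y)) θ v⟫)
    (h3 : ∀ᵐ y ∂γ, gradient (L y) (θd y) = 0 ∧ gradient (Lt y) (θtd y) = 0)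
    (hm1 : Measurable fun y => L y (θtd y) - L y (θd y))
    (hm2 : Measurable fun y => ‖gradient (L y) (θtd y) - gradient (Lt y) (θtd y)‖) :
    (∀ᵐ y ∂γ, 0 ≤ L y (θtd y) - L y (θd y)) ∧
      ∫⁻ y, ENNReal.ofReal (Real.sqrt (L y (θtd y) - L y (θd y))) ∂γ ≤
        ENNReal.ofReal ((Real.sqrt (2 * lam))⁻¹) *
          ∫⁻ y, ENNReal.ofReal ‖gradient (L y) (θtd y) - gradient (Lt y) (θtd y)‖ ∂γ :=
  optimality_gap_bound_general γ L Lt hL θd θtd R lam hR hlam h1 h2 h3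
end
end

section
/- Let C ∈ ℝ^{n×n} be symmetric positive definite, m₀ ∈ ℝⁿ, and let D ∈ ℝ^{n×k} satisfy DᵀC⁻¹D = I_k; set E := DᵀC⁻¹ ∈ ℝ^{k×n}. Let λ₁, …, λ_k ≥ 0 and Λ := diag(λ₁, …, λ_k). Then the matrix C⁻¹ + C⁻¹ D Λ E is symmetric positive definite; denote its inverse by C_LA. The Gaussian measure μ_LA = N(m₀, C_LA) is absolutely continuous with respect to μ = N(0, C), with density dμ_LA/dμ(m) = exp( − ½ m₀ᵀ C⁻¹ m₀ − ½ (E m₀)ᵀ Λ (E m₀) + (E m₀)ᵀ Λ (E m) + m₀ᵀ C⁻¹ m + ½ Σ_{j=1}^{k} log(1 + λⱼ) − ½ (E m)ᵀ Λ (E m) ) for Lebesgue-a.e. m. -/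
open MeasureTheory Matrix Real

noncomputable section

/-- The Laplace-approximation precision matrix `C_LA⁻¹ = C⁻¹ + C⁻¹DΛE`,
with `E = DᵀC⁻¹` and `Λ = diag(λ)`. -/
def laPrecision {n k : ℕ} (C : Matrix (Fin n) (Fin n) ℝ)
    (D : Matrix (Fin n) (Fin k) ℝ) (lam : Fin k → ℝ) : Matrix (Fin n) (Fin n) ℝ :=
  C⁻¹ + C⁻¹ * D * Matrix.diagonal lam * (Dᵀ * C⁻¹)

/-! Both Gaussians have explicit Lebesgue densities, so `dμ_LA/dμ` is their quotient. Writing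
`P = C⁻¹ + EᵀΛE` for the precision of `μ_LA`, the normalising constants contribute
`√(det C · det P) = √(det (I + Λ))`, by Sylvester's identity `det (I + DΛE) = det (I + EDΛ)` and
`ED = DᵀC⁻¹D = I`; the exponents contribute a difference of quadratic forms, computed from
`vᵀPv = vᵀC⁻¹v + (Ev)ᵀΛ(Ev)`. -/

namespace Matrix

theorem IsSymm.dotProduct_mulVec_comm {ι R : Type*} [Fintype ι] [CommSemiring R]
    {A : Matrix ι ι R} (hA : A.IsSymm) (x y : ι → R) :
    x ⬝ᵥ A *ᵥ y = y ⬝ᵥ A *ᵥ x := by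
  rw [dotProduct_mulVec, ← mulVec_transpose, hA.eq, dotProduct_comm]

theorem IsSymm.sub_dotProduct_mulVec_sub {ι R : Type*} [Fintype ι] [CommRing R]
    {A : Matrix ι ι R} (hA : A.IsSymm) (x y : ι → R) :
    (x - y) ⬝ᵥ A *ᵥ (x - y) = x ⬝ᵥ A *ᵥ x - 2 * (y ⬝ᵥ A *ᵥ x) + y ⬝ᵥ A *ᵥ y := by
  rw [sub_dotProduct, mulVec_sub, dotProduct_sub, dotProduct_sub, hA.dotProduct_mulVec_comm x y]
  ring

end Matrix

theorem MeasureTheory.toReal_rnDeriv_withDensity_ofReal {α : Type*} [MeasurableSpace α]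
    {μ : Measure α} [SigmaFinite μ] {f g : α → ℝ} (hf : Measurable f) (hg : Measurable g)
    (hf_nonneg : ∀ᵐ x ∂μ, 0 ≤ f x) (hg_pos : ∀ᵐ x ∂μ, 0 < g x) :
    ∀ᵐ x ∂μ, ((μ.withDensity fun x => ENNReal.ofReal (f x)).rnDeriv
      (μ.withDensity fun x => ENNReal.ofReal (g x)) x).toReal = f x / g x := by
  have : SigmaFinite (μ.withDensity fun x => ENNReal.ofReal (f x)) :=
    SigmaFinite.withDensity_of_ne_top (ae_of_all _ fun _ => ENNReal.ofReal_ne_top)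
  have hg_ne_zero : ∀ᵐ x ∂μ, ENNReal.ofReal (g x) ≠ 0 := by
    filter_upwards [hg_pos] with x hx using (ENNReal.ofReal_pos.2 hx).ne'
  have h_right := Measure.rnDeriv_withDensity_right
    (μ.withDensity fun x => ENNReal.ofReal (f x)) μ hg.ennreal_ofReal.aemeasurable hg_ne_zero
    (ae_of_all _ fun _ => ENNReal.ofReal_ne_top)
  filter_upwards [h_right, Measure.rnDeriv_withDensity μ hf.ennreal_ofReal, hf_nonneg, hg_pos]
    with x hx_right hx_left hfx hgx
  rw [hx_right, hx_left, ENNReal.toReal_mul, ENNReal.toReal_inv, ENNReal.toReal_ofReal hgx.le,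
    ENNReal.toReal_ofReal hfx, div_eq_inv_mul]

section Gaussian

variable {n : ℕ}

def gaussianPdf (m₀ : Fin n → ℝ) (C : Matrix (Fin n) (Fin n) ℝ) (m : Fin n → ℝ) : ℝ :=
  ((2 * π) ^ n * C.det) ^ (-(1 : ℝ) / 2) * Real.exp (-(1 / 2) * ((m - m₀) ⬝ᵥ C⁻¹ *ᵥ (m - m₀)))

theorem gaussianPdf_pos {C : Matrix (Fin n) (Fin n) ℝ} (hC : 0 < C.det) (m₀ m : Fin n → ℝ) :
    0 < gaussianPdf m₀ C m := by
  unfold gaussianPdf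
  positivity

theorem continuous_gaussianPdf (m₀ : Fin n → ℝ) (C : Matrix (Fin n) (Fin n) ℝ) :
    Continuous (gaussianPdf m₀ C) := by
  unfold gaussianPdf
  simp only [dotProduct, mulVec]
  fun_prop

theorem gaussianPdf_div_gaussianPdf {C₁ C₂ : Matrix (Fin n) (Fin n) ℝ} (h₁ : 0 < C₁.det)
    (h₂ : 0 < C₂.det) (m₁ m₂ m : Fin n → ℝ) :
    gaussianPdf m₁ C₁ m / gaussianPdf m₂ C₂ m =
      Real.exp ((1 / 2) * Real.log (C₂.det / C₁.det) -
        (1 / 2) * ((m - m₁) ⬝ᵥ C₁⁻¹ *ᵥ (m - m₁)) + (1 / 2) * ((m - m₂) ⬝ᵥ C₂⁻¹ *ᵥ (m - m₂))) := by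
  have hπ : (0 : ℝ) < (2 * π) ^ n := by positivity
  simp only [gaussianPdf]
  rw [rpow_def_of_pos (mul_pos hπ h₁), rpow_def_of_pos (mul_pos hπ h₂), ← Real.exp_add,
    ← Real.exp_add, ← Real.exp_sub, Real.log_mul hπ.ne' h₁.ne', Real.log_mul hπ.ne' h₂.ne',
    Real.log_div h₂.ne' h₁.ne']
  congr 1
  ring

theorem gaussianOf_absolutelyContinuous {m₁ m₂ : Fin n → ℝ} {C₁ C₂ : Matrix (Fin n) (Fin n) ℝ}
    (h₂ : 0 < C₂.det) :
    gaussianOf m₁ C₁ ≪ gaussianOf m₂ C₂ :=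
  (withDensity_absolutelyContinuous _ _).trans <|
    withDensity_absolutelyContinuous'
      (continuous_gaussianPdf m₂ C₂).measurable.ennreal_ofReal.aemeasurable
      (ae_of_all _ fun m => (ENNReal.ofReal_pos.2 (gaussianPdf_pos h₂ m₂ m)).ne')

theorem toReal_rnDeriv_gaussianOf {C₁ C₂ : Matrix (Fin n) (Fin n) ℝ} (h₁ : 0 < C₁.det)
    (h₂ : 0 < C₂.det) (m₁ m₂ : Fin n → ℝ) :
    ∀ᵐ m, ((gaussianOf m₁ C₁).rnDeriv (gaussianOf m₂ C₂) m).toReal =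
      gaussianPdf m₁ C₁ m / gaussianPdf m₂ C₂ m :=
  toReal_rnDeriv_withDensity_ofReal (continuous_gaussianPdf m₁ C₁).measurable
    (continuous_gaussianPdf m₂ C₂).measurable
    (ae_of_all _ fun m => (gaussianPdf_pos h₁ m₁ m).le) (ae_of_all _ (gaussianPdf_pos h₂ m₂))

end Gaussian

section LaplacePrecision

variable {n k : ℕ} {C : Matrix (Fin n) (Fin n) ℝ} {D : Matrix (Fin n) (Fin k) ℝ}
  {lam : Fin k → ℝ}

theorem laPrecision_eq_add_transpose_mul (hC : C.IsSymm) :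
    laPrecision C D lam = C⁻¹ + (Dᵀ * C⁻¹)ᵀ * diagonal lam * (Dᵀ * C⁻¹) := by
  rw [laPrecision, transpose_mul, hC.inv.eq, transpose_transpose]

theorem posDef_laPrecision (hC : C.PosDef) (hlam : ∀ j, 0 ≤ lam j) :
    (laPrecision C D lam).PosDef := by
  rw [laPrecision_eq_add_transpose_mul (isHermitian_iff_isSymm.1 hC.isHermitian),
    ← conjTranspose_eq_transpose_of_trivial]
  exact hC.inv.add_posSemidef
    ((posSemidef_diagonal_iff.2 hlam).conjTranspose_mul_mul_same _)

theorem dotProduct_mulVec_laPrecision (hC : C.IsSymm) (v : Fin n → ℝ) :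
    v ⬝ᵥ laPrecision C D lam *ᵥ v =
      v ⬝ᵥ C⁻¹ *ᵥ v + ((Dᵀ * C⁻¹) *ᵥ v) ⬝ᵥ diagonal lam *ᵥ ((Dᵀ * C⁻¹) *ᵥ v) := by
  rw [laPrecision_eq_add_transpose_mul hC, add_mulVec, dotProduct_add, ← mulVec_mulVec,
    ← mulVec_mulVec, dotProduct_mulVec v (Dᵀ * C⁻¹)ᵀ, vecMul_transpose]

theorem det_laPrecision (hD : Dᵀ * C⁻¹ * D = 1) :
    (laPrecision C D lam).det = C⁻¹.det * ∏ j, (1 + lam j) := by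
  have h_factor : laPrecision C D lam = C⁻¹ * (1 + (D * diagonal lam) * (Dᵀ * C⁻¹)) := by
    simp only [laPrecision, Matrix.mul_add, Matrix.mul_one, Matrix.mul_assoc]
  have h_swap : (Dᵀ * C⁻¹) * (D * diagonal lam) = diagonal lam := by
    rw [← Matrix.mul_assoc, hD, Matrix.one_mul]
  rw [h_factor, det_mul, det_one_add_mul_comm, h_swap, ← diagonal_one, diagonal_add,
    det_diagonal]

theorem det_div_det_inv_laPrecision (hC : C.det ≠ 0) (hD : Dᵀ * C⁻¹ * D = 1) :
    C.det / (laPrecision C D lam)⁻¹.det = ∏ j, (1 + lam j) := by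
  rw [det_nonsing_inv, Ring.inverse_eq_inv', det_laPrecision hD, det_nonsing_inv,
    Ring.inverse_eq_inv', div_inv_eq_mul, ← mul_assoc, mul_inv_cancel₀ hC, one_mul]

end LaplacePrecision

theorem gaussianPdf_laPrecision_div_gaussianPdf {n k : ℕ} {C : Matrix (Fin n) (Fin n) ℝ}
    (hC : C.PosDef) {D : Matrix (Fin n) (Fin k) ℝ} (hD : Dᵀ * C⁻¹ * D = 1) {lam : Fin k → ℝ}
    (hlam : ∀ j, 0 ≤ lam j) (m₀ m : Fin n → ℝ) :
    gaussianPdf m₀ (laPrecision C D lam)⁻¹ m / gaussianPdf 0 C m =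
      Real.exp (-(1 / 2) * (m₀ ⬝ᵥ C⁻¹ *ᵥ m₀) -
        (1 / 2) * (((Dᵀ * C⁻¹) *ᵥ m₀) ⬝ᵥ diagonal lam *ᵥ ((Dᵀ * C⁻¹) *ᵥ m₀)) +
        (((Dᵀ * C⁻¹) *ᵥ m₀) ⬝ᵥ diagonal lam *ᵥ ((Dᵀ * C⁻¹) *ᵥ m)) +
        (m₀ ⬝ᵥ C⁻¹ *ᵥ m) +
        (1 / 2) * (∑ j, Real.log (1 + lam j)) -
        (1 / 2) * (((Dᵀ * C⁻¹) *ᵥ m) ⬝ᵥ diagonal lam *ᵥ ((Dᵀ * C⁻¹) *ᵥ m))) := by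
  have hP := posDef_laPrecision (D := D) hC hlam
  have hC_symm : C.IsSymm := isHermitian_iff_isSymm.1 hC.isHermitian
  rw [gaussianPdf_div_gaussianPdf hP.inv.det_pos hC.det_pos,
    nonsing_inv_nonsing_inv _ hP.det_pos.ne'.isUnit,
    det_div_det_inv_laPrecision hC.det_pos.ne' hD,
    Real.log_prod fun j _ => by linarith [hlam j],
    sub_zero, dotProduct_mulVec_laPrecision hC_symm, mulVec_sub (Dᵀ * C⁻¹),
    hC_symm.inv.sub_dotProduct_mulVec_sub, (isSymm_diagonal lam).sub_dotProduct_mulVec_sub]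
  congr 1
  ring

/-- Radon–Nikodym derivative between the Laplace approximation
`μ_LA = N(m₀, C_LA)` and the Gaussian prior `μ = N(0, C)`, eq. (la_density). -/
theorem laplace_approximation_density
    {n k : ℕ} (C : Matrix (Fin n) (Fin n) ℝ) (hC : C.PosDef)
    (m₀ : Fin n → ℝ)
    (D : Matrix (Fin n) (Fin k) ℝ) (hD : Dᵀ * C⁻¹ * D = 1)
    (lam : Fin k → ℝ) (hlam : ∀ j, 0 ≤ lam j) :
    (laPrecision C D lam).PosDef ∧
      gaussianOf m₀ (laPrecision C D lam)⁻¹ ≪ gaussianOf 0 C ∧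
      ∀ᵐ m ∂(volume : Measure (Fin n → ℝ)),
        ((gaussianOf m₀ (laPrecision C D lam)⁻¹).rnDeriv (gaussianOf 0 C) m).toReal =
          Real.exp (-(1 / 2) * (m₀ ⬝ᵥ C⁻¹ *ᵥ m₀) -
            (1 / 2) * (((Dᵀ * C⁻¹) *ᵥ m₀) ⬝ᵥ Matrix.diagonal lam *ᵥ ((Dᵀ * C⁻¹) *ᵥ m₀)) +
            (((Dᵀ * C⁻¹) *ᵥ m₀) ⬝ᵥ Matrix.diagonal lam *ᵥ ((Dᵀ * C⁻¹) *ᵥ m)) +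
            (m₀ ⬝ᵥ C⁻¹ *ᵥ m) +
            (1 / 2) * (∑ j, Real.log (1 + lam j)) -
            (1 / 2) * (((Dᵀ * C⁻¹) *ᵥ m) ⬝ᵥ Matrix.diagonal lam *ᵥ ((Dᵀ * C⁻¹) *ᵥ m))) := by
  have hP := posDef_laPrecision (D := D) hC hlam
  refine ⟨hP, gaussianOf_absolutelyContinuous hC.det_pos, ?_⟩
  filter_upwards [toReal_rnDeriv_gaussianOf hP.inv.det_pos hC.det_pos m₀ 0] with m hm
  rw [hm, gaussianPdf_laPrecision_div_gaussianPdf hC hD hlam]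
end
end
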